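/- arXiv:0706.0346 — 6 statements merged into one kernel-verified Lean document; each statement's English description precedes it below -/
import Mathlib

section
/- The only real solution with t² ≥ 3 of the equation t³ − 7t + 2(t²−1)√(t²−3) = 0 is t = 2. -/
theorem only_solution_two (t : ℝ) (ht : t ^ 2 ≥ 3) :
    t ^ 3 - 7 * t + 2 * (t ^ 2 - 1) * Real.sqrt (t ^ 2 - 3) = 0 ↔ t = 2 := by
  have h3 : (0:ℝ) ≤ t ^ 2 - 3 := by linarith
  have hx : Real.sqrt (t ^ 2 - 3) ^ 2 = t ^ 2 - 3 := Real.sq_sqrt h3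
  constructor
  · intro h
    have heq : (t ^ 3 - 7 * t) ^ 2 = 4 * (t ^ 2 - 1) ^ 2 * (t ^ 2 - 3) := by
      have h' : t ^ 3 - 7 * t = -(2 * (t ^ 2 - 1) * Real.sqrt (t ^ 2 - 3)) := by linarith
      rw [h']; nlinarith [hx]
    have h4 : (t ^ 2 - 4) * (t ^ 2 + 1) ^ 2 = 0 := by nlinarith [heq]
    have ht2 : t ^ 2 = 4 := by nlinarith [sq_nonneg (t ^ 2 + 1)]
    have hcase : t = 2 ∨ t = -2 := by
      have hmul : (t - 2) * (t + 2) = 0 := by nlinarith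
      rcases mul_eq_zero.mp hmul with h' | h'
      · left; linarith
      · right; linarith
    rcases hcase with h2 | h2
    · exact h2
    · exfalso
      subst h2
      norm_num [Real.sqrt_one] at h
  · intro h; subst h; norm_num [Real.sqrt_one]
end

section
/- Let p(z) = (z−w₁)(z−w₂)(z−w₃) be a cubic with distinct complex roots, and let z₁, z₂ be the critical points of p. Define σ₁ = (z₁−w₁)/(w₂−w₁) and σ₂ = (z₂−w₂)/(w₃−w₂). Then (1−σ₁)σ₂ = 1/3. -/
theorem ratio_product_eq_third (w₁ w₂ w₃ z₁ z₂ : ℂ)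
    (h12 : w₁ ≠ w₂) (h13 : w₁ ≠ w₃) (h23 : w₂ ≠ w₃)
    (hcrit : ∀ z : ℂ,
      3 * z ^ 2 - 2 * (w₁ + w₂ + w₃) * z + (w₁ * w₂ + w₁ * w₃ + w₂ * w₃) =
        3 * (z - z₁) * (z - z₂)) :
    (1 - (z₁ - w₁) / (w₂ - w₁)) * ((z₂ - w₂) / (w₃ - w₂)) = 1 / 3 := by
  have h := hcrit w₂
  have h21 : w₂ - w₁ ≠ 0 := sub_ne_zero.2 (Ne.symm h12)
  have h32 : w₃ - w₂ ≠ 0 := sub_ne_zero.2 (Ne.symm h23)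
  field_simp
  linear_combination h
end

section
/- For real t with |t| ≥ √3, the function v₁(t) = (1/3)(−2t+√(t²−3))/(t²+1) satisfies −√3/6 ≤ v₁(t) ≤ 1/3, with maximum value 1/3 attained exactly at t = −2. -/
theorem v1_bounds (t : ℝ) (ht : Real.sqrt 3 ≤ |t|) :
    (-(Real.sqrt 3) / 6 ≤ (1 / 3) * ((-2 * t + Real.sqrt (t ^ 2 - 3)) / (t ^ 2 + 1)) ∧
     (1 / 3) * ((-2 * t + Real.sqrt (t ^ 2 - 3)) / (t ^ 2 + 1)) ≤ 1 / 3) ∧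
    ((1 / 3) * ((-2 * t + Real.sqrt (t ^ 2 - 3)) / (t ^ 2 + 1)) = 1 / 3 ↔ t = -2) := by
  have hr0 : (0:ℝ) ≤ Real.sqrt 3 := Real.sqrt_nonneg 3
  have hr2 : (Real.sqrt 3) ^ 2 = 3 := Real.sq_sqrt (by norm_num)
  have h3 : (3:ℝ) ≤ t ^ 2 := by nlinarith [sq_abs t]
  have hs0 : 0 ≤ Real.sqrt (t ^ 2 - 3) := Real.sqrt_nonneg _
  have hs : (Real.sqrt (t ^ 2 - 3)) ^ 2 = t ^ 2 - 3 := Real.sq_sqrt (by linarith)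
  have hD : (0:ℝ) < t ^ 2 + 1 := by positivity
  set s := Real.sqrt (t ^ 2 - 3) with hsdef
  -- upper bound
  have hkey : -2 * t + s ≤ t ^ 2 + 1 := by
    nlinarith [sq_nonneg (t + 2), sq_nonneg (s - (t+1)^2), sq_nonneg (s + (t+1)^2)]
  have hAD : (-2 * t + s) / (t ^ 2 + 1) ≤ 1 := (div_le_one hD).mpr hkey
  -- lower bound
  have hknum : -(Real.sqrt 3 / 2) * (t ^ 2 + 1) ≤ -2 * t + s := by
    rcases le_or_gt t 0 with hneg | hpos
    · nlinarith [mul_nonneg hr0 (le_of_lt hD)]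
    · have habs : |t| = t := abs_of_pos hpos
      have htr : Real.sqrt 3 ≤ t := habs ▸ ht
      have hprod : 0 ≤ (t - Real.sqrt 3) * (Real.sqrt 3 * t - 1) := by
        apply mul_nonneg (by linarith)
        nlinarith
      nlinarith [hprod, hs0]
  have hAD2 : -(Real.sqrt 3 / 2) ≤ (-2 * t + s) / (t ^ 2 + 1) := (le_div_iff₀ hD).mpr hknum
  refine ⟨⟨by linarith, by linarith⟩, ?_⟩
  constructor
  · intro h
    have hA : -2 * t + s = t ^ 2 + 1 := by
      have h1 : (-2 * t + s) / (t ^ 2 + 1) = 1 := by linarith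
      field_simp at h1
      linarith
    have hseq : s = t ^ 2 + 2 * t + 1 := by linarith
    have h2 : (t + 2) ^ 2 * (t ^ 2 + 1) = 0 := by nlinarith [hseq, hs]
    have h4 : (t + 2) ^ 2 = 0 := by
      rcases mul_eq_zero.mp h2 with h | h
      · exact h
      · linarith
    have := pow_eq_zero_iff (two_ne_zero) |>.mp h4
    linarith
  · intro h
    subst h
    norm_num at hsdef ⊢
end

section
/- For real t with |t| ≥ √3, the function v₂(t) = (1/3)(−2t−√(t²−3))/(t²+1) satisfies −1/3 ≤ v₂(t) ≤ √3/6, with minimum value −1/3 attained exactly at t = 2. -/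
theorem v2_bounds (t : ℝ) (ht : Real.sqrt 3 ≤ |t|) :
    (-(1 / 3) ≤ (1 / 3) * ((-2 * t - Real.sqrt (t ^ 2 - 3)) / (t ^ 2 + 1)) ∧
     (1 / 3) * ((-2 * t - Real.sqrt (t ^ 2 - 3)) / (t ^ 2 + 1)) ≤ Real.sqrt 3 / 6) ∧
    ((1 / 3) * ((-2 * t - Real.sqrt (t ^ 2 - 3)) / (t ^ 2 + 1)) = -(1 / 3) ↔ t = 2) := by
  have hs3 : Real.sqrt 3 ^ 2 = 3 := Real.sq_sqrt (by norm_num)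
  have hs3n : 0 ≤ Real.sqrt 3 := Real.sqrt_nonneg 3
  have ht2 : 3 ≤ t ^ 2 := by
    have := sq_abs t
    nlinarith [ht, hs3n]
  set s := Real.sqrt (t ^ 2 - 3) with hsdef
  have hs0 : 0 ≤ s := Real.sqrt_nonneg _
  have hs2 : s ^ 2 = t ^ 2 - 3 := Real.sq_sqrt (by linarith)
  have hden : (0:ℝ) < t ^ 2 + 1 := by positivity
  -- key inequality: s ≤ (t-1)^2
  have hkey : s ≤ (t - 1) ^ 2 := by
    rw [show (t - 1) ^ 2 = Real.sqrt (((t - 1) ^ 2) ^ 2) from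
      (Real.sqrt_sq (sq_nonneg _)).symm]
    exact Real.sqrt_le_sqrt (by nlinarith [sq_nonneg (t - 2)])
  have hlow : -(1 / 3 : ℝ) ≤ (1 / 3) * ((-2 * t - s) / (t ^ 2 + 1)) := by
    have h1 : (-1 : ℝ) ≤ (-2 * t - s) / (t ^ 2 + 1) := by
      rw [le_div_iff₀ hden]; nlinarith
    linarith
  have hup : (1 / 3 : ℝ) * ((-2 * t - s) / (t ^ 2 + 1)) ≤ Real.sqrt 3 / 6 := by
    have h1 : (-2 * t - s) / (t ^ 2 + 1) ≤ Real.sqrt 3 / 2 := by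
      rw [div_le_iff₀ hden]
      rcases le_or_gt 0 t with h | h
      · nlinarith
      · have hc : t ≤ -Real.sqrt 3 := by
          rw [abs_of_neg h] at ht; linarith
        have h2 : Real.sqrt 3 * t + 3 ≤ 0 := by nlinarith
        have h3 : Real.sqrt 3 * t + 1 ≤ 0 := by linarith
        have h4 : 0 ≤ (Real.sqrt 3 * t + 3) * (Real.sqrt 3 * t + 1) := by nlinarith
        nlinarith
    linarith
  refine ⟨⟨hlow, hup⟩, ?_, ?_⟩
  · intro h
    have h1 : (-2 * t - s) / (t ^ 2 + 1) = -1 := by linarith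
    have h2 : -2 * t - s = -(t ^ 2 + 1) := by
      field_simp at h1; linarith
    have h3 : s = (t - 1) ^ 2 := by linarith
    nlinarith [sq_nonneg (t - 2)]
  · rintro rfl
    have : ((2:ℝ) ^ 2 - 3) = 1 := by norm_num
    rw [hsdef, this, Real.sqrt_one]
    norm_num
end

section
/- Let f(w) = (1/3)(w+3−√(3+w²))/(w+1) for complex w ≠ −1 with 3+w² not a nonpositive real number, and f(−1) = 1/2. Then f is analytic (differentiable) on D = ℂ \ {w : Re w = 0 and |Im w| ≥ √3}, and lim_{w→−1} (1/3)(w+3−√(3+w²))/(w+1) = 1/2. -/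
/-!
Multiplying numerator and denominator by the conjugate `w + 3 + √(3 + w²)` turns the numerator
into `6 (w + 1)`, so off `w = -1` the function equals `2 / (w + 3 + √(3 + w²))`, which takes the
value `1 / 2` at `w = -1`. This expression is holomorphic wherever `3 + w²` lies in the slit
plane, in particular on `D`, because its denominator never vanishes.
-/

noncomputable def csqrt (z : ℂ) : ℂ := z ^ (1 / 2 : ℂ)

open Complex

lemma csqrt_sq (z : ℂ) : csqrt z ^ 2 = z := by
  simp [csqrt, one_div]

lemma csqrt_sq_of_re_pos {x : ℂ} (hx : 0 < x.re) : csqrt (x ^ 2) = x := by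
  simpa [csqrt, one_div] using sq_cpow_two_inv hx

lemma differentiableAt_csqrt {z : ℂ} (hz : z ∈ slitPlane) : DifferentiableAt ℂ csqrt z :=
  differentiableAt_id.cpow_const hz

lemma three_add_sq_mem_slitPlane {w : ℂ} (hw : ¬(w.re = 0 ∧ Real.sqrt 3 ≤ |w.im|)) :
    3 + w ^ 2 ∈ slitPlane := by
  have hre : (3 + w ^ 2).re = 3 + w.re ^ 2 - w.im ^ 2 := by simp [sq]; ring
  have him : (3 + w ^ 2).im = 2 * w.re * w.im := by simp [sq]; ring
  rw [mem_slitPlane_iff, hre, him]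
  by_cases hre0 : w.re = 0
  · have him_lt : |w.im| < Real.sqrt 3 := lt_of_not_ge fun h => hw ⟨hre0, h⟩
    have : w.im ^ 2 < 3 := by
      simpa [sq_abs] using (sq_lt_sq' (by linarith [abs_nonneg w.im]) him_lt).trans_eq
        (Real.sq_sqrt (by norm_num))
    left; nlinarith
  · by_cases him0 : w.im = 0
    · left; rw [him0]; nlinarith [sq_nonneg w.re]
    · right; simp [hre0, him0]

/-- The denominator can only vanish where `√(3 + w²) = -(w + 3)`; squaring forces `w = -1`,
where the principal root is `2`, not `-2`. -/
lemma add_three_add_csqrt_ne_zero (w : ℂ) : w + 3 + csqrt (3 + w ^ 2) ≠ 0 := by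
  intro h
  have hroot : csqrt (3 + w ^ 2) = -(w + 3) := by linear_combination h
  have hw : w = -1 := by
    have := csqrt_sq (3 + w ^ 2)
    rw [hroot] at this
    linear_combination this / 6
  subst hw
  rw [show (3 + (-1 : ℂ) ^ 2) = 2 ^ 2 by norm_num, csqrt_sq_of_re_pos (by norm_num)] at hroot
  norm_num at hroot

lemma third_mul_div_eq_two_div {w : ℂ} (hw : w ≠ -1) :
    (1 / 3) * ((w + 3 - csqrt (3 + w ^ 2)) / (w + 1)) = 2 / (w + 3 + csqrt (3 + w ^ 2)) := by
  have hw1 : w + 1 ≠ 0 := by rwa [ne_eq, add_eq_zero_iff_eq_neg]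
  have := add_three_add_csqrt_ne_zero w
  field_simp
  linear_combination -csqrt_sq (3 + w ^ 2)

lemma differentiableAt_two_div {w : ℂ} (hw : 3 + w ^ 2 ∈ slitPlane) :
    DifferentiableAt ℂ (fun w => 2 / (w + 3 + csqrt (3 + w ^ 2))) w := by
  have : DifferentiableAt ℂ (fun w => csqrt (3 + w ^ 2)) w :=
    (differentiableAt_csqrt hw).comp (f := fun w : ℂ => 3 + w ^ 2) w (by fun_prop)
  exact (differentiableAt_const 2).div (by fun_prop) (add_three_add_csqrt_ne_zero w)

lemma two_div_at_neg_one : 2 / (-1 + 3 + csqrt (3 + (-1) ^ 2)) = (1 / 2 : ℂ) := by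
  rw [show (3 + (-1 : ℂ) ^ 2) = 2 ^ 2 by norm_num, csqrt_sq_of_re_pos (by norm_num)]
  norm_num

theorem f_analytic_and_limit :
    DifferentiableOn ℂ
      (fun w : ℂ => if w = -1 then (1 / 2 : ℂ)
        else (1 / 3) * ((w + 3 - csqrt (3 + w ^ 2)) / (w + 1)))
      {w : ℂ | ¬(w.re = 0 ∧ Real.sqrt 3 ≤ |w.im|)} ∧
    Filter.Tendsto (fun w : ℂ => (1 / 3) * ((w + 3 - csqrt (3 + w ^ 2)) / (w + 1)))
      (nhdsWithin (-1) {(-1 : ℂ)}ᶜ) (nhds (1 / 2)) := by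
  set g : ℂ → ℂ := fun w => 2 / (w + 3 + csqrt (3 + w ^ 2))
  have hg_neg_one : g (-1) = 1 / 2 := two_div_at_neg_one
  constructor
  · refine DifferentiableOn.congr (f := g) (fun w hw => ?_) fun w _ => ?_
    · exact (differentiableAt_two_div (three_add_sq_mem_slitPlane hw)).differentiableWithinAt
    · split_ifs with h
      · rw [h, hg_neg_one]
      · exact third_mul_div_eq_two_div h
  · have hg : ContinuousAt g (-1) :=
      (differentiableAt_two_div (by norm_num [mem_slitPlane_iff])).continuousAt
    rw [← hg_neg_one]
    refine (hg.tendsto.mono_left nhdsWithin_le_nhds).congr' ?_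
    filter_upwards [self_mem_nhdsWithin] with w hw
    exact (third_mul_div_eq_two_div hw).symm
end

section
/- Let k be a real number and suppose a complex number w satisfies w+3−√(3+w²) = k(w+1), where √ is the principal square root and 3+w² is not a nonpositive real. If w ≠ ±1, then w is real. (Equivalently: the discriminant of the resulting quadratic (k²−2k)w² + 2(1−k)(3−k)w + (k²−6k+6) = 0 equals 4(2k−3)², which is nonnegative.) -/
theorem w_real_of_ratio_real (k : ℝ) (w : ℂ)
    (hΓ : ¬∃ x : ℝ, x ≤ 0 ∧ (3 + w ^ 2 : ℂ) = (x : ℂ))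
    (heq : w + 3 - csqrt (3 + w ^ 2) = (k : ℂ) * (w + 1))
    (h1 : w ≠ 1) (h2 : w ≠ -1) :
    w.im = 0 := by
  have hz : (3 + w ^ 2 : ℂ) ≠ 0 := by
    intro h
    exact hΓ ⟨0, le_refl 0, by simpa using h⟩
  have hsq : csqrt (3 + w ^ 2) * csqrt (3 + w ^ 2) = 3 + w ^ 2 := by
    unfold csqrt
    rw [← Complex.cpow_add _ _ hz]
    norm_num
  have hc : csqrt (3 + w ^ 2) = w + 3 - (k : ℂ) * (w + 1) := by
    linear_combination -heq
  rw [hc] at hsq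
  have hq : ((k^2 - 2*k : ℝ) : ℂ) * w ^ 2 + ((2*(k^2 - 4*k + 3) : ℝ) : ℂ) * w
      + ((k^2 - 6*k + 6 : ℝ) : ℂ) = 0 := by
    push_cast
    linear_combination hsq
  have him := congrArg Complex.im hq
  have hre := congrArg Complex.re hq
  simp only [pow_two, Complex.add_im, Complex.add_re, Complex.mul_im, Complex.mul_re,
    Complex.ofReal_im, Complex.ofReal_re, Complex.zero_im, Complex.zero_re] at him hre
  have him' : w.im * (2*(k^2 - 2*k)*w.re + 2*(k^2 - 4*k + 3)) = 0 := by
    linear_combination him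
  have hre' : (k^2 - 2*k)*(w.re^2 - w.im^2) + 2*(k^2 - 4*k + 3)*w.re + (k^2 - 6*k + 6) = 0 := by
    linear_combination hre
  by_contra hyne
  have hy2 : w.im ^ 2 > 0 := by positivity
  have hxeq : 2*(k^2 - 2*k)*w.re + 2*(k^2 - 4*k + 3) = 0 :=
    (mul_eq_zero.mp him').resolve_left hyne
  by_cases ha : k^2 - 2*k = 0
  · have hb : k^2 - 4*k + 3 = 0 := by
      have := hxeq
      rw [ha] at this
      linarith
    have hk : k = 3/2 := by linarith
    rw [hk] at ha
    norm_num at ha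
  · have ha2 : (k^2 - 2*k)^2 > 0 := by positivity
    have key : 4*(k^2 - 2*k)^2*w.im^2 + (2*(2*k - 3))^2 = 0 := by
      linear_combination (-4*(k^2 - 2*k))*hre' + (2*(k^2 - 2*k)*w.re + 2*(k^2 - 4*k + 3))*hxeq
    nlinarith [key, mul_pos ha2 hy2, sq_nonneg (2*(2*k - 3))]
end
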